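/- Let 𝔛 be a Hilbert module over a unital C*-algebra 𝔄 and e₁,…,e_m ∈ 𝔛 with ⟨eᵢ,eⱼ⟩ = 0 for i ≠ j and ‖eₖ‖ = 1. Suppose r_k, ρ_k ∈ [0,∞) and x₁,…,xₙ ∈ 𝔛 satisfy r_k‖xⱼ‖·1 ≤ Re⟨eₖ,xⱼ⟩ and ρ_k‖xⱼ‖·1 ≤ Im⟨eₖ,xⱼ⟩ in 𝔄 for all j,k. Then (∑ₖ (r_k² + ρ_k²)) · (∑ⱼ‖xⱼ‖)² · 1 ≤ |∑ⱼ xⱼ|² in the order of 𝔄, and hence (∑ₖ(r_k²+ρ_k²))^{1/2} ∑ⱼ‖xⱼ‖·1 ≤ |∑ⱼ xⱼ|. -/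

import Mathlib

open scoped RightActions

/-- Hermitian real part of an element of a complex *-algebra. -/
noncomputable def cre {A : Type*} [Ring A] [StarRing A] [Module ℂ A] (a : A) : A :=
  (2 : ℂ)⁻¹ • (a + star a)

/-- Hermitian imaginary part of an element of a complex *-algebra. -/
noncomputable def cim {A : Type*} [Ring A] [StarRing A] [Module ℂ A] (a : A) : A :=
  (2 * Complex.I)⁻¹ • (a - star a)

/-- Hilbert C⋆-module with a *right* `A`-action (the convention of Mathlib in December 2024;
Mathlib's current `CStarModule` uses a left action `SMul A E` instead). -/
class CStarModuleOp (A : outParam <| Type*) (E : Type*) [NonUnitalSemiring A] [StarRing A]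
    [Module ℂ A] [AddCommGroup E] [Module ℂ E] [PartialOrder A] [SMul Aᵐᵒᵖ E] [Norm A] [Norm E]
    extends Inner A E where
  inner_add_right {x} {y} {z} : inner x (y + z) = inner x y + inner x z
  inner_self_nonneg {x} : 0 ≤ inner x x
  inner_self {x} : inner x x = 0 ↔ x = 0
  inner_op_smul_right {a : A} {x y : E} : inner x (y <• a) = inner x y * a
  inner_smul_right_complex {z : ℂ} {x} {y} : inner x (z • y) = z • inner x y
  star_inner x y : star (inner x y) = inner y x
  norm_eq_sqrt_norm_inner_self x : ‖x‖ = √‖inner x x‖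

/-! Write `X = ∑ⱼ xⱼ`, `S = ∑ⱼ ‖xⱼ‖` and `aₖ = ⟨eₖ, X⟩`. Summing the hypotheses over `j` gives
`rₖ S ≤ Re aₖ` and `ρₖ S ≤ Im aₖ`; expanding `0 ≤ |aₖ - λ|²` with `λ = rₖ S + i ρₖ S` turns these
into `(rₖ² + ρₖ²) S² ≤ aₖ* aₖ`. Bessel's inequality `∑ₖ aₖ* aₖ ≤ ⟨X, X⟩` for the orthogonal
family `(eₖ)`, whose members satisfy `⟨eₖ, eₖ⟩ ≤ ‖⟨eₖ, eₖ⟩‖ = 1`, gives the first inequality, and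
operator monotonicity of the square root the second. -/

section ReIm

variable {A : Type*} [Ring A] [StarRing A] [Module ℂ A]

theorem cre_sum {ι : Type*} (s : Finset ι) (a : ι → A) :
    cre (∑ i ∈ s, a i) = ∑ i ∈ s, cre (a i) := by
  simp only [cre, star_sum, ← Finset.sum_add_distrib, Finset.smul_sum]

theorem cim_sum {ι : Type*} (s : Finset ι) (a : ι → A) :
    cim (∑ i ∈ s, a i) = ∑ i ∈ s, cim (a i) := by
  simp only [cim, star_sum, ← Finset.sum_sub_distrib, Finset.smul_sum]

end ReIm

section CStarAlgebra

variable {A : Type*} [CStarAlgebra A]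

theorem star_mul_self_eq_star_sub_mul_sub_add (a : A) (t s : ℝ) :
    star a * a = star (a - (t + s * Complex.I : ℂ) • 1) * (a - (t + s * Complex.I : ℂ) • 1)
      + (2 * t) • (cre a - t • 1) + (2 * s) • (cim a - s • 1) + (t ^ 2 + s ^ 2) • 1 := by
  simp only [cre, cim, star_sub, star_smul, star_one, sub_mul, mul_sub,
    smul_mul_assoc, mul_smul_comm, mul_one, one_mul, RCLike.real_smul_eq_coe_smul (K := ℂ)]
  match_scalars <;> apply Complex.ext <;> simp [← Complex.ofReal_pow] <;> ring

variable [PartialOrder A] [StarOrderedRing A]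

theorem smul_one_le_star_mul_self {a : A} {t s : ℝ} (ht : 0 ≤ t) (hs : 0 ≤ s)
    (hre : t • (1 : A) ≤ cre a) (him : s • (1 : A) ≤ cim a) :
    (t ^ 2 + s ^ 2) • (1 : A) ≤ star a * a := by
  rw [star_mul_self_eq_star_sub_mul_sub_add a t s]
  refine le_add_of_nonneg_left (add_nonneg (add_nonneg (star_mul_self_nonneg _) ?_) ?_)
  · exact smul_nonneg (by positivity) (sub_nonneg.2 hre)
  · exact smul_nonneg (by positivity) (sub_nonneg.2 him)

theorem smul_one_le_sqrt {a : A} {t : ℝ} (ht : 0 ≤ t) (h : (t ^ 2) • (1 : A) ≤ a) :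
    t • (1 : A) ≤ CFC.sqrt a := by
  have ht1 : (0 : A) ≤ t • 1 := smul_nonneg ht zero_le_one
  calc t • (1 : A) = CFC.sqrt ((t • (1 : A)) ^ 2) := (CFC.sqrt_sq _ ht1).symm
    _ = CFC.sqrt ((t ^ 2) • (1 : A)) := by rw [smul_pow, one_pow]
    _ ≤ CFC.sqrt a := CFC.sqrt_le_sqrt _ _ h

end CStarAlgebra

namespace CStarModuleOp

theorem norm_nonneg {A E : Type*} [NonUnitalSemiring A] [StarRing A] [Module ℂ A]
    [PartialOrder A] [Norm A] [AddCommGroup E] [Module ℂ E] [SMul Aᵐᵒᵖ E] [Norm E]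
    [CStarModuleOp A E] (x : E) : 0 ≤ ‖x‖ := by
  rw [norm_eq_sqrt_norm_inner_self (A := A) x]
  exact Real.sqrt_nonneg _

section Algebraic

variable {A E : Type*} [NonUnitalRing A] [StarRing A] [Module ℂ A] [PartialOrder A] [Norm A]
  [AddCommGroup E] [Module ℂ E] [SMul Aᵐᵒᵖ E] [Norm E] [CStarModuleOp A E]

theorem inner_zero_right (x : E) : inner A x (0 : E) = 0 := by
  simpa using inner_add_right (A := A) (x := x) (y := (0 : E)) (z := 0)

def innerRight (x : E) : E →+ A where
  toFun := inner A x
  map_zero' := CStarModuleOp.inner_zero_right x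
  map_add' _ _ := inner_add_right

theorem inner_sub_right (x y z : E) : inner A x (y - z) = inner A x y - inner A x z :=
  map_sub (innerRight x) y z

theorem inner_sum_right {ι : Type*} (s : Finset ι) (x : E) (y : ι → E) :
    inner A x (∑ i ∈ s, y i) = ∑ i ∈ s, inner A x (y i) :=
  map_sum (innerRight x) y s

theorem inner_sub_left (x y z : E) : inner A (x - y) z = inner A x z - inner A y z := by
  rw [← star_inner z, CStarModuleOp.inner_sub_right, star_sub, star_inner, star_inner]

theorem inner_sum_left {ι : Type*} (s : Finset ι) (x : ι → E) (y : E) :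
    inner A (∑ i ∈ s, x i) y = ∑ i ∈ s, inner A (x i) y := by
  rw [← star_inner y, CStarModuleOp.inner_sum_right, star_sum]
  simp only [star_inner]

theorem inner_op_smul_left (a : A) (x y : E) : inner A (x <• a) y = star a * inner A x y := by
  rw [← star_inner y, inner_op_smul_right, star_mul, star_inner]

theorem inner_sum_op_smul_self_of_pairwise {ι : Type*} (s : Finset ι) {e : ι → E}
    (horth : Pairwise fun i j => inner A (e i) (e j) = 0) (a : ι → A) :
    inner A (∑ i ∈ s, e i <• a i) (∑ i ∈ s, e i <• a i) =
      ∑ i ∈ s, star (a i) * inner A (e i) (e i) * a i := by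
  rw [CStarModuleOp.inner_sum_left]
  refine Finset.sum_congr rfl fun i hi => ?_
  rw [CStarModuleOp.inner_sum_right, Finset.sum_eq_single_of_mem i hi fun j _ hji => ?_]
  · rw [inner_op_smul_right, inner_op_smul_left, mul_assoc]
  · rw [inner_op_smul_right, inner_op_smul_left, horth hji.symm, mul_zero, zero_mul]

end Algebraic

section Bessel

variable {A E : Type*} [Ring A] [StarRing A] [Module ℂ A] [PartialOrder A] [StarOrderedRing A]
  [Norm A] [AddCommGroup E] [Module ℂ E] [SMul Aᵐᵒᵖ E] [Norm E] [CStarModuleOp A E]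

theorem sum_star_inner_mul_inner_le_inner_self {ι : Type*} [Fintype ι] {e : ι → E}
    (horth : Pairwise fun i j => inner A (e i) (e j) = 0) (he : ∀ i, inner A (e i) (e i) ≤ 1)
    (x : E) : ∑ i, star (inner A (e i) x) * inner A (e i) x ≤ inner A x x := by
  set a : ι → A := fun i => inner A (e i) x
  set B : A := ∑ i, star (a i) * a i
  set y : E := ∑ i, e i <• a i
  have hxy : inner A x y = B := by
    rw [CStarModuleOp.inner_sum_right]
    refine Finset.sum_congr rfl fun i _ => ?_
    rw [inner_op_smul_right, ← star_inner]
  have hyx : inner A y x = B := by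
    rw [← star_inner, hxy, star_sum]
    simp only [star_mul, star_star, B]
  have hyy : inner A y y ≤ B := by
    rw [inner_sum_op_smul_self_of_pairwise _ horth]
    refine Finset.sum_le_sum fun i _ => ?_
    simpa using star_left_conjugate_le_conjugate (he i) (a i)
  have hdiff : 0 ≤ inner A (x - y) (x - y) := inner_self_nonneg
  rw [CStarModuleOp.inner_sub_left, CStarModuleOp.inner_sub_right,
    CStarModuleOp.inner_sub_right, hxy, hyx] at hdiff
  calc B ≤ B + (B - inner A y y) := le_add_of_nonneg_right (sub_nonneg.2 hyy)
    _ ≤ inner A x x := le_sub_iff_add_le'.1 (sub_nonneg.1 hdiff)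

end Bessel

section CStarAlgebra

variable {A E : Type*} [CStarAlgebra A] [PartialOrder A] [StarOrderedRing A]
  [AddCommGroup E] [Module ℂ E] [SMul Aᵐᵒᵖ E] [Norm E] [CStarModuleOp A E]

theorem inner_self_le_one {x : E} (hx : ‖x‖ ≤ 1) : inner A x x ≤ 1 := by
  have hsq : ‖inner A x x‖ ≤ 1 := by
    rw [← Real.sq_sqrt (_root_.norm_nonneg (inner A x x)), ← norm_eq_sqrt_norm_inner_self x]
    exact pow_le_one₀ (CStarModuleOp.norm_nonneg x) hx
  calc inner A x x ≤ algebraMap ℝ A ‖inner A x x‖ :=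
        IsSelfAdjoint.le_algebraMap_norm_self (star_inner x x)
    _ ≤ algebraMap ℝ A 1 := algebraMap_mono A hsq
    _ = 1 := map_one _

theorem smul_one_le_inner_sum_self {ι κ : Type*} [Fintype ι] [Fintype κ] {e : κ → E}
    (horth : Pairwise fun k l => inner A (e k) (e l) = 0) (hnorm : ∀ k, ‖e k‖ ≤ 1)
    {x : ι → E} {r ρ : κ → ℝ} (hr : ∀ k, 0 ≤ r k) (hρ : ∀ k, 0 ≤ ρ k)
    (hre : ∀ j k, (r k * ‖x j‖) • (1 : A) ≤ cre (inner A (e k) (x j)))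
    (him : ∀ j k, (ρ k * ‖x j‖) • (1 : A) ≤ cim (inner A (e k) (x j))) :
    ((∑ k, (r k ^ 2 + ρ k ^ 2)) * (∑ j, ‖x j‖) ^ 2) • (1 : A) ≤
      inner A (∑ j, x j) (∑ j, x j) := by
  set X := ∑ j, x j
  set S := ∑ j, ‖x j‖
  have hS : 0 ≤ S := Finset.sum_nonneg fun j _ => CStarModuleOp.norm_nonneg (x j)
  have hreX (k : κ) : (r k * S) • (1 : A) ≤ cre (inner A (e k) X) := by
    rw [CStarModuleOp.inner_sum_right, cre_sum, Finset.mul_sum, Finset.sum_smul]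
    exact Finset.sum_le_sum fun j _ => hre j k
  have himX (k : κ) : (ρ k * S) • (1 : A) ≤ cim (inner A (e k) X) := by
    rw [CStarModuleOp.inner_sum_right, cim_sum, Finset.mul_sum, Finset.sum_smul]
    exact Finset.sum_le_sum fun j _ => him j k
  calc ((∑ k, (r k ^ 2 + ρ k ^ 2)) * S ^ 2) • (1 : A)
      = ∑ k, ((r k * S) ^ 2 + (ρ k * S) ^ 2) • (1 : A) := by
        rw [Finset.sum_mul, Finset.sum_smul]
        congr! 2 with k
        ring
    _ ≤ ∑ k, star (inner A (e k) X) * inner A (e k) X :=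
        Finset.sum_le_sum fun k _ => smul_one_le_star_mul_self
          (mul_nonneg (hr k) hS) (mul_nonneg (hρ k) hS) (hreX k) (himX k)
    _ ≤ inner A X X :=
        sum_star_inner_mul_inner_le_inner_self horth (fun k => inner_self_le_one (hnorm k)) X

end CStarAlgebra

end CStarModuleOp

theorem stmt7 {A E : Type*} [CStarAlgebra A] [PartialOrder A] [StarOrderedRing A]
    [AddCommGroup E] [Module ℂ E] [SMul Aᵐᵒᵖ E] [Norm E] [CStarModuleOp A E]
    (m n : ℕ) (e : Fin m → E) (x : Fin n → E)
    (horth : ∀ i j, i ≠ j → (inner A (e i) (e j) : A) = 0) (hnorm : ∀ k, ‖e k‖ = 1)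
    (r ρ : Fin m → ℝ) (hr : ∀ k, 0 ≤ r k) (hρ : ∀ k, 0 ≤ ρ k)
    (h₁ : ∀ j k, (r k * ‖x j‖) • (1 : A) ≤ cre (inner A (e k) (x j) : A))
    (h₂ : ∀ j k, (ρ k * ‖x j‖) • (1 : A) ≤ cim (inner A (e k) (x j) : A)) :
    ((∑ k, (r k ^ 2 + ρ k ^ 2)) * (∑ j, ‖x j‖) ^ 2) • (1 : A) ≤
        (inner A (∑ j, x j) (∑ j, x j) : A) ∧
      (Real.sqrt (∑ k, (r k ^ 2 + ρ k ^ 2)) * ∑ j, ‖x j‖) • (1 : A) ≤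
        CFC.sqrt (inner A (∑ j, x j) (∑ j, x j) : A) := by
  have hsq := CStarModuleOp.smul_one_le_inner_sum_self horth (fun k => (hnorm k).le) hr hρ h₁ h₂
  have hS : 0 ≤ ∑ j, ‖x j‖ := Finset.sum_nonneg fun j _ => CStarModuleOp.norm_nonneg (x j)
  refine ⟨hsq, smul_one_le_sqrt (mul_nonneg (Real.sqrt_nonneg _) hS) ?_⟩
  rwa [mul_pow, Real.sq_sqrt (Finset.sum_nonneg fun k _ => by positivity)]
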